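/- Let I be an open interval containing 0, let X = (X₁,…,Xₙ) and Y = (Y₁,…,Yₙ) be vectors of independent I-valued random variables with E[Xᵢ] = E[Yᵢ] and E[Xᵢ²] = E[Yᵢ²] for each i, with X and Y independent of each other, and suppose γ := max{E|Xᵢ|³, E|Yᵢ|³ : 1 ≤ i ≤ n} < ∞. Let f : Iⁿ → ℝ be thrice differentiable in each coordinate, U = f(X), V = f(Y). Then for every thrice differentiable g : ℝ → ℝ with bounded first three derivatives, |E g(U) − E g(V)| ≤ 2 C₂(g) γ n λ₃(f). -/

import Mathlib

open MeasureTheory ProbabilityTheory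

/-- The `p`-fold partial derivative of `f` in the `i`-th coordinate, at `x`. -/
noncomputable def pderiv (n : ℕ) (f : (Fin n → ℝ) → ℝ) (i : Fin n) (p : ℕ)
    (x : Fin n → ℝ) : ℝ :=
  iteratedDeriv p (fun t => f (Function.update x i t)) (x i)

/-- `f` is thrice differentiable in each coordinate on `Iⁿ`. -/
def CoordDiff3 (n : ℕ) (I : Set ℝ) (f : (Fin n → ℝ) → ℝ) : Prop :=
  ∀ (i : Fin n) (x : Fin n → ℝ), (∀ j, x j ∈ I) →
    ∀ p < 3, DifferentiableOn ℝ
      (iteratedDeriv p fun t => f (Function.update x i t)) I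

/-- The set whose supremum is `λ_r(f)`. -/
def lamSet (n : ℕ) (I : Set ℝ) (f : (Fin n → ℝ) → ℝ) (r : ℕ) : Set ℝ :=
  { y | ∃ (i : Fin n) (p : ℕ) (x : Fin n → ℝ),
      1 ≤ p ∧ p ≤ r ∧ (∀ j, x j ∈ I) ∧
      y = |pderiv n f i p x| ^ ((r : ℝ) / (p : ℝ)) }

/-- `λ_r(f) = sup { |∂ᵢᵖ f(x)|^{r/p} : 1 ≤ i ≤ n, 1 ≤ p ≤ r, x ∈ Iⁿ }`. -/
noncomputable def lam (n : ℕ) (I : Set ℝ) (f : (Fin n → ℝ) → ℝ) (r : ℕ) : ℝ :=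
  sSup (lamSet n I f r)

/-
Lindeberg's replacement argument. Pass from `Y` to `X` one coordinate at a time through the
hybrid vectors `(X₁, …, Xₖ, Yₖ₊₁, …, Yₙ)`. Swapping `Yₖ` for `Xₖ` compares `E H(Xₖ)` with
`E H(Yₖ)`, where `H(t) = g (f w[k ↦ t])` and `w` collects the other coordinates. Taylor's theorem
at `0` gives `H(t) = H(0) + H'(0) t + H''(0) t² / 2 + R(t)` with `|R(t)| ≤ sup |H'''| |t|³ / 6`.
The coefficients `H'(0)`, `H''(0)` are functions of `w`, hence independent of `Xₖ` and `Yₖ`, so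
the matching first two moments cancel the polynomial part. Since `|∂ₖᵖ f| ≤ λ₃(f)^{p/3}`, Faà di
Bruno's formula bounds `|H'''|` by `(‖g'‖ + 3‖g''‖ + ‖g'''‖) λ₃(f)`, and each of the `n` swaps
costs at most `2 C₂(g) γ λ₃(f)`.
-/

open Set Filter Topology

theorem iteratedDerivWithin_eqOn_iteratedDeriv {s : Set ℝ} (hs : UniqueDiffOn ℝ s) {h : ℝ → ℝ}
    {N : ℕ} (hd : ∀ p < N, ∀ u ∈ s, DifferentiableAt ℝ (iteratedDeriv p h) u) :
    ∀ p ≤ N, EqOn (iteratedDerivWithin p h s) (iteratedDeriv p h) s := by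
  intro p
  induction p with
  | zero => simp [EqOn]
  | succ p ih =>
    intro hp u hu
    rw [iteratedDerivWithin_succ, iteratedDeriv_succ,
      derivWithin_congr (ih (by omega)) (ih (by omega) hu)]
    exact (hd p (by omega) u hu).derivWithin (hs u hu)

theorem abs_sub_taylor_two_le {s : Set ℝ} (hs : s.OrdConnected) {h : ℝ → ℝ}
    (hd : ∀ p < 3, ∀ u ∈ s, DifferentiableAt ℝ (iteratedDeriv p h) u) {M : ℝ}
    (hM : ∀ u ∈ s, |iteratedDeriv 3 h u| ≤ M) {a t : ℝ} (ha : a ∈ s) (ht : t ∈ s) :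
    |h t - (h a + deriv h a * (t - a) + iteratedDeriv 2 h a * (t - a) ^ 2 / 2)|
      ≤ M * |t - a| ^ 3 / 6 := by
  rcases eq_or_ne a t with rfl | hat
  · simp
  have hJs : uIcc a t ⊆ s := hs.uIcc_subset ha ht
  have hE : ∀ p ≤ 3, EqOn (iteratedDerivWithin p h (uIcc a t)) (iteratedDeriv p h) (uIcc a t) :=
    iteratedDerivWithin_eqOn_iteratedDeriv (uniqueDiffOn_Icc (min_lt_max.2 hat))
      fun p hp u hu => hd p hp u (hJs hu)
  have hdiffOn : ∀ p < 3, DifferentiableOn ℝ (iteratedDerivWithin p h (uIcc a t)) (uIcc a t) :=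
    fun p hp u hu => ((hd p hp u (hJs hu)).differentiableWithinAt).congr
      (hE p hp.le) (hE p hp.le hu)
  obtain ⟨c, hc, hrem⟩ := taylor_mean_remainder_lagrange (n := 2) hat
    (contDiffOn_of_differentiableOn_deriv fun p hp => hdiffOn p (by norm_cast at hp; omega))
    ((hdiffOn 2 (by norm_num)).mono uIoo_subset_uIcc_self)
  have hc' : c ∈ uIcc a t := uIoo_subset_uIcc_self hc
  have ha' : a ∈ uIcc a t := left_mem_uIcc
  rw [taylor_within_apply] at hrem
  simp only [Finset.sum_range_succ, Finset.sum_range_zero, smul_eq_mul] at hrem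
  rw [hE 0 (by norm_num) ha', hE 1 (by norm_num) ha', hE 2 (by norm_num) ha', hE 3 le_rfl hc',
    iteratedDeriv_zero, iteratedDeriv_one] at hrem
  calc _ = |iteratedDeriv 3 h c * (t - a) ^ 3 / 6| := by
        norm_num [Nat.factorial] at hrem; rw [← hrem]; ring_nf
    _ ≤ M * |t - a| ^ 3 / 6 := by
        rw [abs_div, abs_mul, abs_pow, abs_of_pos (by norm_num : (0:ℝ) < 6)]
        gcongr; exact hM c (hJs hc')

theorem hasDerivAt_iteratedDeriv {h : ℝ → ℝ} {p : ℕ} {u : ℝ}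
    (hd : DifferentiableAt ℝ (iteratedDeriv p h) u) :
    HasDerivAt (iteratedDeriv p h) (iteratedDeriv (p + 1) h u) u := by
  rw [iteratedDeriv_succ]; exact hd.hasDerivAt

section Comp

variable {s : Set ℝ} {F g : ℝ → ℝ}

theorem hasDerivAt_iteratedDeriv_comp (hs : IsOpen s)
    (hF : ∀ p < 3, ∀ u ∈ s, DifferentiableAt ℝ (iteratedDeriv p F) u)
    (hg : ∀ p < 3, Differentiable ℝ (iteratedDeriv p g)) {u : ℝ} (hu : u ∈ s) :
    HasDerivAt (fun x => g (F x)) (deriv g (F u) * deriv F u) u ∧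
    HasDerivAt (deriv fun x => g (F x))
      (iteratedDeriv 2 g (F u) * deriv F u ^ 2 + deriv g (F u) * iteratedDeriv 2 F u) u ∧
    HasDerivAt (iteratedDeriv 2 fun x => g (F x))
      (iteratedDeriv 3 g (F u) * deriv F u ^ 3
        + 3 * iteratedDeriv 2 g (F u) * deriv F u * iteratedDeriv 2 F u
        + deriv g (F u) * iteratedDeriv 3 F u) u := by
  have dF0 : ∀ x ∈ s, HasDerivAt F (deriv F x) x := fun x hx => by
    simpa using hasDerivAt_iteratedDeriv (hF 0 (by norm_num) x hx)
  have dF1 : ∀ x ∈ s, HasDerivAt (deriv F) (iteratedDeriv 2 F x) x := fun x hx => by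
    simpa using hasDerivAt_iteratedDeriv (hF 1 (by norm_num) x hx)
  have dF2 : HasDerivAt (iteratedDeriv 2 F) (iteratedDeriv 3 F u) u :=
    hasDerivAt_iteratedDeriv (hF 2 (by norm_num) u hu)
  have dg0 : ∀ y, HasDerivAt g (deriv g y) y := fun y => by
    simpa using hasDerivAt_iteratedDeriv (hg 0 (by norm_num) y)
  have dg1 : ∀ y, HasDerivAt (deriv g) (iteratedDeriv 2 g y) y := fun y => by
    simpa using hasDerivAt_iteratedDeriv (hg 1 (by norm_num) y)
  have dg2 : ∀ y, HasDerivAt (iteratedDeriv 2 g) (iteratedDeriv 3 g y) y := fun y =>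
    hasDerivAt_iteratedDeriv (hg 2 (by norm_num) y)
  have d1 : ∀ x ∈ s, HasDerivAt (fun x => g (F x)) (deriv g (F x) * deriv F x) x :=
    fun x hx => (dg0 (F x)).comp x (dF0 x hx)
  have d2 : ∀ x ∈ s, HasDerivAt (fun x => deriv g (F x) * deriv F x)
      (iteratedDeriv 2 g (F x) * deriv F x ^ 2 + deriv g (F x) * iteratedDeriv 2 F x) x := by
    intro x hx
    exact (((dg1 (F x)).comp x (dF0 x hx)).mul (dF1 x hx)).congr_deriv
      (by simp only [Function.comp_apply]; ring)
  have e1 : deriv (fun x => g (F x)) =ᶠ[𝓝 u] fun x => deriv g (F x) * deriv F x :=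
    eventually_of_mem (hs.mem_nhds hu) fun x hx => (d1 x hx).deriv
  have e2 : iteratedDeriv 2 (fun x => g (F x)) =ᶠ[𝓝 u]
      fun x => iteratedDeriv 2 g (F x) * deriv F x ^ 2 + deriv g (F x) * iteratedDeriv 2 F x :=
    eventually_of_mem (hs.mem_nhds hu) fun x hx => by
      rw [iteratedDeriv_succ, iteratedDeriv_one]
      exact ((d2 x hx).congr_of_eventuallyEq
        (eventually_of_mem (hs.mem_nhds hx) fun y hy => (d1 y hy).deriv)).deriv
  refine ⟨d1 u hu, (d2 u hu).congr_of_eventuallyEq e1, ?_⟩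
  refine HasDerivAt.congr_of_eventuallyEq ?_ e2
  exact ((((dg2 (F u)).comp u (dF0 u hu)).mul ((dF1 u hu).pow 2)).add
    (((dg1 (F u)).comp u (dF0 u hu)).mul dF2)).congr_deriv
    (by simp only [Function.comp_apply, Pi.pow_apply]; norm_num; ring)

theorem differentiableAt_iteratedDeriv_comp (hs : IsOpen s)
    (hF : ∀ p < 3, ∀ u ∈ s, DifferentiableAt ℝ (iteratedDeriv p F) u)
    (hg : ∀ p < 3, Differentiable ℝ (iteratedDeriv p g)) :
    ∀ p < 3, ∀ u ∈ s, DifferentiableAt ℝ (iteratedDeriv p fun x => g (F x)) u := by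
  intro p hp u hu
  obtain ⟨d1, d2, d3⟩ := hasDerivAt_iteratedDeriv_comp hs hF hg hu
  interval_cases p
  exacts [by simpa using d1.differentiableAt, by simpa using d2.differentiableAt,
    d3.differentiableAt]

theorem abs_iteratedDeriv_comp_le (hs : IsOpen s)
    (hF : ∀ p < 3, ∀ u ∈ s, DifferentiableAt ℝ (iteratedDeriv p F) u)
    (hg : ∀ p < 3, Differentiable ℝ (iteratedDeriv p g)) {A B1 B2 B3 : ℝ}
    (hFA : ∀ p, 1 ≤ p → p ≤ 3 → ∀ u ∈ s, |iteratedDeriv p F u| ≤ A ^ p)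
    (hB1 : ∀ y, |deriv g y| ≤ B1) (hB2 : ∀ y, |iteratedDeriv 2 g y| ≤ B2)
    (hB3 : ∀ y, |iteratedDeriv 3 g y| ≤ B3) {u : ℝ} (hu : u ∈ s) :
    |deriv (fun x => g (F x)) u| ≤ B1 * A ∧
    |iteratedDeriv 2 (fun x => g (F x)) u| ≤ (B1 + B2) * A ^ 2 ∧
    |iteratedDeriv 3 (fun x => g (F x)) u| ≤ (B1 + 3 * B2 + B3) * A ^ 3 := by
  obtain ⟨d1, d2, d3⟩ := hasDerivAt_iteratedDeriv_comp hs hF hg hu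
  have hF1 : |deriv F u| ≤ A := by simpa using hFA 1 le_rfl (by norm_num) u hu
  have hF2 := hFA 2 (by norm_num) (by norm_num) u hu
  have hF3 := hFA 3 (by norm_num) le_rfl u hu
  have hA : 0 ≤ A := (abs_nonneg _).trans hF1
  have hB1' : 0 ≤ B1 := (abs_nonneg _).trans (hB1 0)
  have hB2' : 0 ≤ B2 := (abs_nonneg _).trans (hB2 0)
  have hB3' : 0 ≤ B3 := (abs_nonneg _).trans (hB3 0)
  rw [d1.deriv, iteratedDeriv_succ (f := fun x => g (F x)), iteratedDeriv_one, d2.deriv,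
    iteratedDeriv_succ (f := fun x => g (F x)), d3.deriv]
  refine ⟨?_, ?_, ?_⟩
  · rw [abs_mul]; gcongr; exact hB1 _
  · calc _ ≤ |iteratedDeriv 2 g (F u)| * |deriv F u| ^ 2
          + |deriv g (F u)| * |iteratedDeriv 2 F u| := by
          rw [← abs_pow, ← abs_mul, ← abs_mul]; exact abs_add_le _ _
      _ ≤ B2 * A ^ 2 + B1 * A ^ 2 := by gcongr; exacts [hB2 _, hB1 _]
      _ = (B1 + B2) * A ^ 2 := by ring
  · calc _ ≤ |iteratedDeriv 3 g (F u) * deriv F u ^ 3|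
          + |3 * iteratedDeriv 2 g (F u) * deriv F u * iteratedDeriv 2 F u|
          + |deriv g (F u) * iteratedDeriv 3 F u| := abs_add_three _ _ _
      _ = |iteratedDeriv 3 g (F u)| * |deriv F u| ^ 3
          + 3 * |iteratedDeriv 2 g (F u)| * |deriv F u| * |iteratedDeriv 2 F u|
          + |deriv g (F u)| * |iteratedDeriv 3 F u| := by norm_num [abs_mul, abs_pow]
      _ ≤ B3 * A ^ 3 + 3 * B2 * A * A ^ 2 + B1 * A ^ 3 := by
          gcongr; exacts [hB3 _, hB2 _, hB1 _]
      _ = (B1 + 3 * B2 + B3) * A ^ 3 := by ring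

theorem measurable_deriv_apply {α : Type*} {m : MeasurableSpace α} {H : α → ℝ → ℝ} {t : ℝ}
    (hmeas : ∀ᶠ u in 𝓝 t, Measurable fun a => H a u) (hdiff : ∀ a, DifferentiableAt ℝ (H a) t) :
    Measurable fun a => deriv (H a) t := by
  obtain ⟨u, hu, hmu⟩ := exists_seq_forall_of_frequently
    (hmeas.filter_mono nhdsWithin_le_nhds : ∀ᶠ u in 𝓝[≠] t, _).frequently
  refine measurable_of_tendsto_metrizable (f := fun k a => slope (H a) t (u k))
    (fun k => ?_) (tendsto_pi_nhds.2 fun a => ?_)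
  · simp only [slope_def_field]
    exact ((hmu k).sub hmeas.self_of_nhds).div_const _
  · exact (hasDerivAt_iff_tendsto_slope.1 (hdiff a).hasDerivAt).comp hu

theorem measurable_iteratedDeriv_apply {α : Type*} {m : MeasurableSpace α} {I : Set ℝ}
    (hI : IsOpen I) {H : α → ℝ → ℝ} (hmeas : ∀ u ∈ I, Measurable fun a => H a u) {N : ℕ}
    (hdiff : ∀ a, ∀ p < N, ∀ u ∈ I, DifferentiableAt ℝ (iteratedDeriv p (H a)) u) :
    ∀ p ≤ N, ∀ u ∈ I, Measurable fun a => iteratedDeriv p (H a) u := by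
  intro p
  induction p with
  | zero => simpa using hmeas
  | succ p ih =>
    intro hp u hu
    simp only [iteratedDeriv_succ]
    exact measurable_deriv_apply (eventually_of_mem (hI.mem_nhds hu) (ih (by omega)))
      fun a => hdiff a p (by omega) u hu

section Hybrid

variable {n : ℕ} {α : Type*}

def hybrid (v w : Fin n → α) (k : ℕ) : Fin n → α := fun i => if (i : ℕ) < k then v i else w i

@[simp] theorem hybrid_zero (v w : Fin n → α) : hybrid v w 0 = w := by
  ext i; simp [hybrid]

@[simp] theorem hybrid_self (v w : Fin n → α) : hybrid v w n = v := by
  ext i; simp [hybrid]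

theorem hybrid_succ (v w : Fin n → α) (i : Fin n) :
    hybrid v w (i + 1) = Function.update (hybrid v w i) i (v i) := by
  ext j
  rcases eq_or_ne j i with rfl | hj
  · simp [hybrid]
  · have : (j : ℕ) ≠ i := Fin.val_ne_of_ne hj
    simp only [hybrid, Function.update_of_ne hj]
    split_ifs <;> first | rfl | omega

theorem update_hybrid_self (v w : Fin n → α) (i : Fin n) :
    Function.update (hybrid v w i) i (w i) = hybrid v w i :=
  Function.update_eq_self_iff.2 (by simp [hybrid])

theorem hybrid_mem {s : Set α} {v w : Fin n → α} (hv : ∀ j, v j ∈ s) (hw : ∀ j, w j ∈ s)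
    (k : ℕ) (j : Fin n) : hybrid v w k j ∈ s := by
  unfold hybrid; split_ifs; exacts [hv j, hw j]

end Hybrid

theorem abs_sub_le_sum_abs_sub_succ (A : ℕ → ℝ) (n : ℕ) :
    |A n - A 0| ≤ ∑ i : Fin n, |A (i + 1) - A i| := by
  rw [← Finset.sum_range_sub, Finset.sum_range fun k => A (k + 1) - A k]
  exact Finset.abs_sum_le_sum_abs _ _

theorem abs_sub_le_mul_sum_of_update {n : ℕ} {s : Set ℝ} {φ : (Fin n → ℝ) → ℝ} {L : ℝ}
    (hφ : ∀ z, (∀ j, z j ∈ s) → ∀ i, ∀ a ∈ s, ∀ b ∈ s,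
      |φ (Function.update z i a) - φ (Function.update z i b)| ≤ L * |a - b|)
    {v w : Fin n → ℝ} (hv : ∀ j, v j ∈ s) (hw : ∀ j, w j ∈ s) :
    |φ v - φ w| ≤ L * ∑ j, |v j - w j| := by
  calc |φ v - φ w| ≤ ∑ i : Fin n, |φ (hybrid v w (i + 1)) - φ (hybrid v w i)| := by
        simpa using abs_sub_le_sum_abs_sub_succ (fun k => φ (hybrid v w k)) n
    _ ≤ ∑ i : Fin n, L * |v i - w i| := Finset.sum_le_sum fun i _ => by
        rw [hybrid_succ, ← update_hybrid_self v w i]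
        simpa only [Function.update_idem] using
          hφ _ (hybrid_mem hv hw i) i (v i) (hv i) (w i) (hw i)
    _ = L * ∑ j, |v j - w j| := (Finset.mul_sum _ _ _).symm

section Slices

variable {n : ℕ} {I : Set ℝ} {f : (Fin n → ℝ) → ℝ}

-- This holds also when `lamSet n I f r` is unbounded, as `sSup` is then `0`.
theorem lam_nonneg (r : ℕ) : 0 ≤ lam n I f r :=
  Real.sSup_nonneg fun _ ⟨_, _, _, _, _, _, hy⟩ => hy ▸ Real.rpow_nonneg (abs_nonneg _) _

theorem abs_pderiv_le_lam {r : ℕ} (hbdd : BddAbove (lamSet n I f r)) {i : Fin n} {p : ℕ}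
    (hp : 1 ≤ p) (hpr : p ≤ r) {x : Fin n → ℝ} (hx : ∀ j, x j ∈ I) :
    |pderiv n f i p x| ≤ (lam n I f r ^ ((r : ℝ)⁻¹)) ^ p := by
  have hp0 : (0 : ℝ) < p := by exact_mod_cast hp
  have hr0 : (0 : ℝ) < r := by exact_mod_cast hp.trans hpr
  have hmem : |pderiv n f i p x| ^ ((r : ℝ) / p) ≤ lam n I f r :=
    le_csSup hbdd ⟨i, p, x, hp, hpr, hx, rfl⟩
  rw [← Real.rpow_natCast, ← Real.rpow_mul (lam_nonneg r)]
  calc |pderiv n f i p x| = (|pderiv n f i p x| ^ ((r : ℝ) / p)) ^ ((r : ℝ)⁻¹ * p) := by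
        rw [← Real.rpow_mul (abs_nonneg _)]; field_simp; simp
    _ ≤ _ := by gcongr

theorem iteratedDeriv_update_eq_pderiv (x : Fin n → ℝ) (i : Fin n) (p : ℕ) (u : ℝ) :
    iteratedDeriv p (fun t => f (Function.update x i t)) u
      = pderiv n f i p (Function.update x i u) := by
  simp [pderiv]

theorem forall_update_mem {x : Fin n → ℝ} (hx : ∀ j, x j ∈ I) (i : Fin n) {u : ℝ}
    (hu : u ∈ I) :
    ∀ j, Function.update x i u j ∈ I :=
  (Function.forall_update_iff x fun _ y => y ∈ I).2 ⟨hu, fun j _ => hx j⟩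

theorem CoordDiff3.differentiableAt (hf : CoordDiff3 n I f) (hI : IsOpen I) {x : Fin n → ℝ}
    (hx : ∀ j, x j ∈ I) (i : Fin n) :
    ∀ p < 3, ∀ u ∈ I, DifferentiableAt ℝ (iteratedDeriv p fun t => f (Function.update x i t)) u :=
  fun p hp _ hu => (hf i x hx p hp).differentiableAt (hI.mem_nhds hu)

theorem abs_iteratedDeriv_update_le (hbdd : BddAbove (lamSet n I f 3)) {x : Fin n → ℝ}
    (hx : ∀ j, x j ∈ I) (i : Fin n) :
    ∀ p, 1 ≤ p → p ≤ 3 → ∀ u ∈ I, |iteratedDeriv p (fun t => f (Function.update x i t)) u|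
      ≤ (lam n I f 3 ^ (3 : ℝ)⁻¹) ^ p := fun p hp hp3 u hu => by
  rw [iteratedDeriv_update_eq_pderiv]
  exact_mod_cast abs_pderiv_le_lam hbdd hp hp3 (forall_update_mem hx i hu)

theorem CoordDiff3.abs_sub_le (hf : CoordDiff3 n I f) (hI : IsOpen I) (hIc : I.OrdConnected)
    (hbdd : BddAbove (lamSet n I f 3)) {v w : Fin n → ℝ} (hv : ∀ j, v j ∈ I)
    (hw : ∀ j, w j ∈ I) :
    |f v - f w| ≤ lam n I f 3 ^ (3 : ℝ)⁻¹ * ∑ j, |v j - w j| := by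
  refine abs_sub_le_mul_sum_of_update (fun z hz i a ha b hb => ?_) hv hw
  have := (convex_iff_ordConnected.2 hIc).norm_image_sub_le_of_norm_deriv_le
    (fun u hu => by simpa using hf.differentiableAt hI hz i 0 (by norm_num) u hu)
    (fun u hu => by simpa using abs_iteratedDeriv_update_le hbdd hz i 1 le_rfl (by norm_num) u hu)
    hb ha
  simpa only [Real.norm_eq_abs] using this

theorem CoordDiff3.continuousOn (hf : CoordDiff3 n I f) (hI : IsOpen I) (hIc : I.OrdConnected)
    (hbdd : BddAbove (lamSet n I f 3)) : ContinuousOn f {v | ∀ j, v j ∈ I} := by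
  set L := lam n I f 3 ^ (3 : ℝ)⁻¹
  have hL : 0 ≤ L := Real.rpow_nonneg (lam_nonneg 3) _
  refine (LipschitzOnWith.of_dist_le_mul (K := ⟨L * n, by positivity⟩)
    fun v hv w hw => ?_).continuousOn
  calc dist (f v) (f w) ≤ L * ∑ j, |v j - w j| := hf.abs_sub_le hI hIc hbdd hv hw
    _ ≤ L * ∑ _j : Fin n, dist v w := by
        gcongr with j; rw [← Real.dist_eq]; exact dist_le_pi_dist v w j
    _ = L * n * dist v w := by simp [mul_assoc]

end Slices

theorem integral_mul_comp_of_indep {Ω : Type*} {m : MeasurableSpace Ω} [mΩ : MeasurableSpace Ω]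
    {μ : Measure Ω} {ξ U : Ω → ℝ} (hξ : Measurable[m] ξ) (hm : m ≤ mΩ) (hU : Measurable U)
    (hiU : Indep m (.comap U inferInstance) μ) {ψ : ℝ → ℝ} (hψ : Measurable ψ) :
    ∫ ω, ξ ω * ψ (U ω) ∂μ = (∫ ω, ξ ω ∂μ) * ∫ ω, ψ (U ω) ∂μ := by
  have hind : IndepFun ξ (fun ω => ψ (U ω)) μ := (IndepFun_iff_Indep _ _ _).2 <|
    indep_of_indep_of_le_right (indep_of_indep_of_le_left hiU hξ.comap_le)
      (hψ.comp (comap_measurable U)).comap_le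
  exact hind.integral_mul_eq_mul_integral (hξ.mono hm le_rfl).aestronglyMeasurable
    (hψ.comp hU).aestronglyMeasurable

section Quadratic

variable {Ω : Type*} {m : MeasurableSpace Ω} [mΩ : MeasurableSpace Ω] {μ : Measure Ω}
  [IsFiniteMeasure μ] {b c U : Ω → ℝ} {C1 C2 : ℝ}

theorem integrable_mul_add_mul_sq (hb : AEStronglyMeasurable b μ)
    (hc : AEStronglyMeasurable c μ) (hbC : ∀ ω, |b ω| ≤ C1) (hcC : ∀ ω, |c ω| ≤ C2)
    (hU : MemLp U 2 μ) : Integrable (fun ω => b ω * U ω + c ω * U ω ^ 2 / 2) μ :=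
  ((hU.integrable one_le_two).bdd_mul hb (ae_of_all _ hbC)).add
    ((hU.integrable_sq.bdd_mul hc (ae_of_all _ hcC)).div_const 2)

theorem integral_mul_add_mul_sq_of_indep (hm : m ≤ mΩ) (hb : Measurable[m] b)
    (hc : Measurable[m] c) (hbC : ∀ ω, |b ω| ≤ C1) (hcC : ∀ ω, |c ω| ≤ C2)
    (hU : Measurable U) (hU2 : MemLp U 2 μ) (hiU : Indep m (.comap U inferInstance) μ) :
    ∫ ω, (b ω * U ω + c ω * U ω ^ 2 / 2) ∂μ
      = (∫ ω, b ω ∂μ) * (∫ ω, U ω ∂μ) + (∫ ω, c ω ∂μ) * (∫ ω, U ω ^ 2 ∂μ) / 2 := by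
  have hbU : Integrable (fun ω => b ω * U ω) μ :=
    (hU2.integrable one_le_two).bdd_mul (hb.mono hm le_rfl).aestronglyMeasurable (ae_of_all _ hbC)
  have hcU : Integrable (fun ω => c ω * U ω ^ 2) μ :=
    hU2.integrable_sq.bdd_mul (hc.mono hm le_rfl).aestronglyMeasurable (ae_of_all _ hcC)
  have hbU' : ∫ ω, b ω * U ω ∂μ = (∫ ω, b ω ∂μ) * ∫ ω, U ω ∂μ :=
    integral_mul_comp_of_indep hb hm hU hiU measurable_id
  have hcU' : ∫ ω, c ω * U ω ^ 2 ∂μ = (∫ ω, c ω ∂μ) * ∫ ω, U ω ^ 2 ∂μ :=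
    integral_mul_comp_of_indep hc hm hU hiU (ψ := fun x => x ^ 2) (by fun_prop)
  rw [integral_add hbU (hcU.div_const 2), integral_div, hbU', hcU', mul_div_assoc]

end Quadratic

theorem abs_integral_sub_le_of_indep_of_moments {Ω : Type*} {m : MeasurableSpace Ω}
    [mΩ : MeasurableSpace Ω] {μ : Measure Ω} [IsProbabilityMeasure μ] (hm : m ≤ mΩ)
    {I : Set ℝ} (hI : IsOpen I) (hIc : I.OrdConnected) (hI0 : 0 ∈ I) {H : Ω → ℝ → ℝ}
    (hHmeas : ∀ u ∈ I, Measurable[m] fun ω => H ω u)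
    (hHdiff : ∀ ω, ∀ p < 3, ∀ u ∈ I, DifferentiableAt ℝ (iteratedDeriv p (H ω)) u)
    {C1 C2 M : ℝ} (hC1 : ∀ ω, |deriv (H ω) 0| ≤ C1) (hC2 : ∀ ω, |iteratedDeriv 2 (H ω) 0| ≤ C2)
    (hM : ∀ ω, ∀ u ∈ I, |iteratedDeriv 3 (H ω) u| ≤ M)
    {U V : Ω → ℝ} (hU : Measurable U) (hV : Measurable V) (hUI : ∀ ω, U ω ∈ I)
    (hVI : ∀ ω, V ω ∈ I) (hU3 : MemLp U 3 μ) (hV3 : MemLp V 3 μ)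
    (hiU : Indep m (.comap U inferInstance) μ) (hiV : Indep m (.comap V inferInstance) μ)
    (hmean : ∫ ω, U ω ∂μ = ∫ ω, V ω ∂μ) (hvar : ∫ ω, U ω ^ 2 ∂μ = ∫ ω, V ω ^ 2 ∂μ)
    (hHU : Integrable (fun ω => H ω (U ω)) μ) (hHV : Integrable (fun ω => H ω (V ω)) μ) :
    |∫ ω, H ω (U ω) ∂μ - ∫ ω, H ω (V ω) ∂μ|
      ≤ M / 6 * (∫ ω, |U ω| ^ 3 ∂μ + ∫ ω, |V ω| ^ 3 ∂μ) := by
  set b : Ω → ℝ := fun ω => deriv (H ω) 0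
  set c : Ω → ℝ := fun ω => iteratedDeriv 2 (H ω) 0
  set P : Ω → ℝ → ℝ := fun ω t => b ω * t + c ω * t ^ 2 / 2
  have hb : Measurable[m] b := by
    simpa using measurable_iteratedDeriv_apply hI hHmeas hHdiff 1 (by norm_num) 0 hI0
  have hc : Measurable[m] c := measurable_iteratedDeriv_apply hI hHmeas hHdiff 2 (by norm_num) 0 hI0
  have hU2 : MemLp U 2 μ := hU3.mono_exponent (by norm_num)
  have hV2 : MemLp V 2 μ := hV3.mono_exponent (by norm_num)
  have hPU : Integrable (fun ω => P ω (U ω)) μ := integrable_mul_add_mul_sq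
    (hb.mono hm le_rfl).aestronglyMeasurable (hc.mono hm le_rfl).aestronglyMeasurable hC1 hC2 hU2
  have hPV : Integrable (fun ω => P ω (V ω)) μ := integrable_mul_add_mul_sq
    (hb.mono hm le_rfl).aestronglyMeasurable (hc.mono hm le_rfl).aestronglyMeasurable hC1 hC2 hV2
  have hP : ∫ ω, P ω (U ω) ∂μ = ∫ ω, P ω (V ω) ∂μ := by
    rw [integral_mul_add_mul_sq_of_indep hm hb hc hC1 hC2 hU hU2 hiU,
      integral_mul_add_mul_sq_of_indep hm hb hc hC1 hC2 hV hV2 hiV, hmean, hvar]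
  have hU3' : Integrable (fun ω => |U ω| ^ 3) μ := by
    simpa using hU3.integrable_norm_pow (p := 3) (by norm_num)
  have hV3' : Integrable (fun ω => |V ω| ^ 3) μ := by
    simpa using hV3.integrable_norm_pow (p := 3) (by norm_num)
  have split : ∫ ω, H ω (U ω) ∂μ - ∫ ω, H ω (V ω) ∂μ
      = ∫ ω, ((H ω (U ω) - P ω (U ω)) - (H ω (V ω) - P ω (V ω))) ∂μ := by
    have hRU : Integrable (fun ω => H ω (U ω) - P ω (U ω)) μ := hHU.sub hPU
    have hRV : Integrable (fun ω => H ω (V ω) - P ω (V ω)) μ := hHV.sub hPV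
    rw [integral_sub hRU hRV, integral_sub hHU hPU, integral_sub hHV hPV, hP]
    ring
  rw [split, ← integral_add hU3' hV3', ← integral_const_mul]
  refine norm_integral_le_of_norm_le (G := ℝ) ((hU3'.add hV3').const_mul _)
    (ae_of_all _ fun ω => ?_)
  have taylor : ∀ t ∈ I, |H ω t - (H ω 0 + P ω t)| ≤ M * |t| ^ 3 / 6 := fun t ht => by
    simpa [P, add_assoc] using abs_sub_taylor_two_le hIc (hHdiff ω) (hM ω) hI0 ht
  calc _ = |(H ω (U ω) - (H ω 0 + P ω (U ω))) - (H ω (V ω) - (H ω 0 + P ω (V ω)))| := by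
        rw [Real.norm_eq_abs]; ring_nf
    _ ≤ M / 6 * (|U ω| ^ 3 + |V ω| ^ 3) := by
        linarith [(abs_sub _ _).trans (add_le_add (taylor _ (hUI ω)) (taylor _ (hVI ω)))]

theorem ContinuousOn.measurable_comp {α β γ : Type*} {m : MeasurableSpace α}
    [TopologicalSpace β] [MeasurableSpace β] [OpensMeasurableSpace β]
    [TopologicalSpace γ] [MeasurableSpace γ] [BorelSpace γ] {φ : β → γ} {s : Set β}
    (hφ : ContinuousOn φ s) {Z : α → β} (hZ : Measurable Z) (hZs : ∀ a, Z a ∈ s) :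
    Measurable fun a => φ (Z a) :=
  (continuousOn_iff_continuous_domRestrict.1 hφ).measurable.comp (hZ.subtype_mk (h := hZs))

theorem iIndepFun.indep_iSup_comap {Ω ι β : Type*} [mΩ : MeasurableSpace Ω] {μ : Measure Ω}
    [mβ : MeasurableSpace β] {Z : ι → Ω → β} (h : iIndepFun Z μ) (hZ : ∀ i, Measurable (Z i))
    {T : Set ι} {i : ι} (hi : i ∉ T) :
    Indep (⨆ j ∈ T, mβ.comap (Z j)) (mβ.comap (Z i)) μ := by
  simpa using indep_iSup_of_disjoint (m := fun j => mβ.comap (Z j)) (fun j => (hZ j).comap_le)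
    h (Set.disjoint_singleton_right.2 hi)

theorem abs_integral_hybrid_succ_sub_le {Ω : Type*} [mΩ : MeasurableSpace Ω] {μ : Measure Ω}
    [IsProbabilityMeasure μ] {n : ℕ} {I : Set ℝ} (hI : IsOpen I) (hIc : I.OrdConnected)
    (hI0 : 0 ∈ I) {X Y : Fin n → Ω → ℝ} (hXmeas : ∀ i, Measurable (X i))
    (hYmeas : ∀ i, Measurable (Y i)) (hXI : ∀ i ω, X i ω ∈ I) (hYI : ∀ i ω, Y i ω ∈ I)
    (hindep : iIndepFun (Sum.elim X Y) μ) (hmean : ∀ i, ∫ ω, X i ω ∂μ = ∫ ω, Y i ω ∂μ)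
    (hvar : ∀ i, ∫ ω, X i ω ^ 2 ∂μ = ∫ ω, Y i ω ^ 2 ∂μ)
    (hX3 : ∀ i, MemLp (X i) 3 μ) (hY3 : ∀ i, MemLp (Y i) 3 μ)
    {φ : (Fin n → ℝ) → ℝ} (hφ : ContinuousOn φ {v | ∀ j, v j ∈ I})
    (hdiff : ∀ w, (∀ j, w j ∈ I) → ∀ i, ∀ p < 3, ∀ u ∈ I,
      DifferentiableAt ℝ (iteratedDeriv p fun t => φ (Function.update w i t)) u)
    {C1 C2 M : ℝ}
    (hC1 : ∀ w, (∀ j, w j ∈ I) → ∀ i, |deriv (fun t => φ (Function.update w i t)) 0| ≤ C1)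
    (hC2 : ∀ w, (∀ j, w j ∈ I) → ∀ i,
      |iteratedDeriv 2 (fun t => φ (Function.update w i t)) 0| ≤ C2)
    (hM : ∀ w, (∀ j, w j ∈ I) → ∀ i, ∀ u ∈ I,
      |iteratedDeriv 3 (fun t => φ (Function.update w i t)) u| ≤ M)
    (hint : ∀ k, Integrable (fun ω => φ fun j => hybrid X Y k j ω) μ) (i : Fin n) :
    |∫ ω, φ (fun j => hybrid X Y (i + 1) j ω) ∂μ - ∫ ω, φ (fun j => hybrid X Y i j ω) ∂μ|
      ≤ M / 6 * (∫ ω, |X i ω| ^ 3 ∂μ + ∫ ω, |Y i ω| ^ 3 ∂μ) := by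
  set Z := Sum.elim X Y
  have hZ : ∀ j, Measurable (Z j) := Sum.forall.2 ⟨hXmeas, hYmeas⟩
  set T : Set (Fin n ⊕ Fin n) := {Sum.inl i, Sum.inr i}ᶜ
  set m : MeasurableSpace Ω := ⨆ j ∈ T, MeasurableSpace.comap (Z j) inferInstance
  -- `m` is now the most recent local instance, so the ambient `mΩ` is passed explicitly below.
  have hZm : ∀ j ∈ T, Measurable[m] (Z j) := fun j hj =>
    measurable_iff_comap_le.2 (le_iSup₂ (f := fun j _ => MeasurableSpace.comap (Z j) _) j hj)
  have hW : ∀ ω j, hybrid X Y i j ω ∈ I := fun ω j =>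
    hybrid_mem (s := {h : Ω → ℝ | ∀ ω, h ω ∈ I}) hXI hYI i j ω
  have hWm : ∀ t, Measurable[m] fun ω => Function.update (fun j => hybrid X Y i j ω) i t :=
    fun t => measurable_pi_iff.2 fun j => by
      rcases eq_or_ne j i with rfl | hj
      · simp
      · simp only [Function.update_of_ne hj, hybrid]
        split_ifs
        exacts [hZm (Sum.inl j) (by simp [T, hj]), hZm (Sum.inr j) (by simp [T, hj])]
  have key := abs_integral_sub_le_of_indep_of_moments (mΩ := mΩ)
    (iSup₂_le fun j _ => (hZ j).comap_le) hI hIc hI0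
    (H := fun ω t => φ (Function.update (fun j => hybrid X Y i j ω) i t))
    (fun u hu => hφ.measurable_comp (hWm u) fun ω => forall_update_mem (hW ω) i hu)
    (fun ω => hdiff _ (hW ω) i) (fun ω => hC1 _ (hW ω) i) (fun ω => hC2 _ (hW ω) i)
    (fun ω => hM _ (hW ω) i) (hXmeas i) (hYmeas i) (hXI i) (hYI i) (hX3 i) (hY3 i)
    (iIndepFun.indep_iSup_comap (mΩ := mΩ) hindep hZ (i := Sum.inl i) (by simp [T]))
    (iIndepFun.indep_iSup_comap (mΩ := mΩ) hindep hZ (i := Sum.inr i) (by simp [T]))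
    (hmean i) (hvar i)
  have eX : ∀ ω, Function.update (fun j => hybrid X Y i j ω) i (X i ω)
      = fun j => hybrid X Y (i + 1) j ω := fun ω => by
    ext j; rcases eq_or_ne j i with rfl | hj <;> simp [hybrid_succ, *]
  have eY : ∀ ω, Function.update (fun j => hybrid X Y i j ω) i (Y i ω)
      = fun j => hybrid X Y i j ω := fun ω => Function.update_eq_self_iff.2 (by simp [hybrid])
  simpa only [eX, eY] using
    key (by simpa only [eX] using hint (i + 1)) (by simpa only [eY] using hint i)

theorem abs_integral_sub_le_of_slices {Ω : Type*} [MeasurableSpace Ω] {μ : Measure Ω}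
    [IsProbabilityMeasure μ] {n : ℕ} {I : Set ℝ} (hI : IsOpen I) (hIc : I.OrdConnected)
    (hI0 : 0 ∈ I) {X Y : Fin n → Ω → ℝ} (hXmeas : ∀ i, Measurable (X i))
    (hYmeas : ∀ i, Measurable (Y i)) (hXI : ∀ i ω, X i ω ∈ I) (hYI : ∀ i ω, Y i ω ∈ I)
    (hindep : iIndepFun (Sum.elim X Y) μ) (hmean : ∀ i, ∫ ω, X i ω ∂μ = ∫ ω, Y i ω ∂μ)
    (hvar : ∀ i, ∫ ω, X i ω ^ 2 ∂μ = ∫ ω, Y i ω ^ 2 ∂μ)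
    (hX3 : ∀ i, MemLp (X i) 3 μ) (hY3 : ∀ i, MemLp (Y i) 3 μ)
    {φ : (Fin n → ℝ) → ℝ} (hφ : ContinuousOn φ {v | ∀ j, v j ∈ I})
    (hdiff : ∀ w, (∀ j, w j ∈ I) → ∀ i, ∀ p < 3, ∀ u ∈ I,
      DifferentiableAt ℝ (iteratedDeriv p fun t => φ (Function.update w i t)) u)
    {C1 C2 M : ℝ}
    (hC1 : ∀ w, (∀ j, w j ∈ I) → ∀ i, |deriv (fun t => φ (Function.update w i t)) 0| ≤ C1)
    (hC2 : ∀ w, (∀ j, w j ∈ I) → ∀ i,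
      |iteratedDeriv 2 (fun t => φ (Function.update w i t)) 0| ≤ C2)
    (hM : ∀ w, (∀ j, w j ∈ I) → ∀ i, ∀ u ∈ I,
      |iteratedDeriv 3 (fun t => φ (Function.update w i t)) u| ≤ M)
    (hint : ∀ k, Integrable (fun ω => φ fun j => hybrid X Y k j ω) μ) :
    |∫ ω, φ (fun j => X j ω) ∂μ - ∫ ω, φ (fun j => Y j ω) ∂μ|
      ≤ M / 6 * ∑ i, (∫ ω, |X i ω| ^ 3 ∂μ + ∫ ω, |Y i ω| ^ 3 ∂μ) := by
  calc _ = |∫ ω, φ (fun j => hybrid X Y n j ω) ∂μ - ∫ ω, φ (fun j => hybrid X Y 0 j ω) ∂μ| := by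
        simp
    _ ≤ ∑ i : Fin n, |∫ ω, φ (fun j => hybrid X Y (i + 1) j ω) ∂μ
          - ∫ ω, φ (fun j => hybrid X Y i j ω) ∂μ| :=
        abs_sub_le_sum_abs_sub_succ (fun k => ∫ ω, φ (fun j => hybrid X Y k j ω) ∂μ) n
    _ ≤ ∑ i, M / 6 * (∫ ω, |X i ω| ^ 3 ∂μ + ∫ ω, |Y i ω| ^ 3 ∂μ) :=
        Finset.sum_le_sum fun i _ => abs_integral_hybrid_succ_sub_le hI hIc hI0 hXmeas hYmeas
          hXI hYI hindep hmean hvar hX3 hY3 hφ hdiff hC1 hC2 hM hint i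
    _ = _ := (Finset.mul_sum _ _ _).symm

theorem CoordDiff3.integrable_comp {n : ℕ} {I : Set ℝ} {f : (Fin n → ℝ) → ℝ}
    (hf : CoordDiff3 n I f) (hI : IsOpen I) (hIc : I.OrdConnected) (hI0 : 0 ∈ I)
    (hbdd : BddAbove (lamSet n I f 3)) {g : ℝ → ℝ} (hg : Differentiable ℝ g) {B1 : ℝ}
    (hB1 : ∀ y, |deriv g y| ≤ B1) {Ω : Type*} [MeasurableSpace Ω] {μ : Measure Ω}
    [IsFiniteMeasure μ] {Z : Fin n → Ω → ℝ} (hZ : ∀ j, Measurable (Z j))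
    (hZI : ∀ j ω, Z j ω ∈ I) (hZint : ∀ j, Integrable (Z j) μ) :
    Integrable (fun ω => g (f fun j => Z j ω)) μ := by
  have hB1' : 0 ≤ B1 := (abs_nonneg _).trans (hB1 0)
  refine Integrable.mono' ((integrable_const |g (f 0)|).add
      ((integrable_finsetSum Finset.univ fun j _ => (hZint j).abs).const_mul
        (B1 * lam n I f 3 ^ (3 : ℝ)⁻¹)))
    ((hg.continuous.comp_continuousOn (hf.continuousOn hI hIc hbdd)).measurable_comp
      (measurable_pi_lambda _ hZ) fun ω j => hZI j ω).aestronglyMeasurable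
    (ae_of_all _ fun ω => ?_)
  have hglip := convex_univ.norm_image_sub_le_of_norm_deriv_le (fun y _ => hg y)
    (fun y _ => hB1 y) (mem_univ (f 0)) (mem_univ (f fun j => Z j ω))
  have hflip := hf.abs_sub_le hI hIc hbdd (w := 0) (fun j => hZI j ω) (fun _ => hI0)
  simp only [Real.norm_eq_abs, Pi.zero_apply, sub_zero] at hglip hflip ⊢
  calc |g (f fun j => Z j ω)| ≤ |g (f 0)| + B1 * |f (fun j => Z j ω) - f 0| := by
        linarith [abs_sub_abs_le_abs_sub (g (f fun j => Z j ω)) (g (f 0))]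
    _ ≤ |g (f 0)| + B1 * lam n I f 3 ^ (3 : ℝ)⁻¹ * ∑ j, |Z j ω| := by
        rw [mul_assoc]; gcongr

theorem stmt1_general
    {Ω : Type} [MeasurableSpace Ω] {μ : Measure Ω} [IsProbabilityMeasure μ]
    {n : ℕ} {I : Set ℝ} (hIopen : IsOpen I) (hIconn : I.OrdConnected)
    (hI0 : (0 : ℝ) ∈ I)
    (X Y : Fin n → Ω → ℝ)
    (hXmeas : ∀ i, Measurable (X i)) (hYmeas : ∀ i, Measurable (Y i))
    (hXI : ∀ i ω, X i ω ∈ I) (hYI : ∀ i ω, Y i ω ∈ I)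
    (hindep : iIndepFun (Sum.elim X Y) μ)
    (hmean : ∀ i, ∫ ω, X i ω ∂μ = ∫ ω, Y i ω ∂μ)
    (hvar : ∀ i, ∫ ω, (X i ω) ^ 2 ∂μ = ∫ ω, (Y i ω) ^ 2 ∂μ)
    (γ : ℝ)
    (hX3 : ∀ i, MemLp (X i) 3 μ) (hY3 : ∀ i, MemLp (Y i) 3 μ)
    (hγX : ∀ i, ∫ ω, |X i ω| ^ 3 ∂μ ≤ γ) (hγY : ∀ i, ∫ ω, |Y i ω| ^ 3 ∂μ ≤ γ)
    (f : (Fin n → ℝ) → ℝ) (hf : CoordDiff3 n I f)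
    (hbdd3 : BddAbove (lamSet n I f 3))
    (g : ℝ → ℝ) (hg : ∀ p < 3, Differentiable ℝ (iteratedDeriv p g))
    (B1 B2 B3 : ℝ)
    (hB1 : ∀ t, |deriv g t| ≤ B1)
    (hB2 : ∀ t, |iteratedDeriv 2 g t| ≤ B2)
    (hB3 : ∀ t, |iteratedDeriv 3 g t| ≤ B3) :
    |(∫ ω, g (f fun i => X i ω) ∂μ) - ∫ ω, g (f fun i => Y i ω) ∂μ| ≤
      2 * (B1 / 6 + B2 / 2 + B3 / 6) * γ * n * lam n I f 3 := by
  have hg0 : Differentiable ℝ g := by simpa using hg 0 (by norm_num)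
  have hslice := fun (w : Fin n → ℝ) (hw : ∀ j, w j ∈ I) i u (hu : u ∈ I) =>
    abs_iteratedDeriv_comp_le hIopen (hf.differentiableAt hIopen hw i) hg
      (abs_iteratedDeriv_update_le hbdd3 hw i) hB1 hB2 hB3 hu
  have key := abs_integral_sub_le_of_slices hIopen hIconn hI0 hXmeas hYmeas hXI hYI hindep
    hmean hvar hX3 hY3 (hg0.continuous.comp_continuousOn (hf.continuousOn hIopen hIconn hbdd3))
    (fun w hw i => differentiableAt_iteratedDeriv_comp hIopen (hf.differentiableAt hIopen hw i) hg)
    (fun w hw i => (hslice w hw i 0 hI0).1) (fun w hw i => (hslice w hw i 0 hI0).2.1)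
    (fun w hw i u hu => (hslice w hw i u hu).2.2) fun k =>
      hf.integrable_comp hIopen hIconn hI0 hbdd3 hg0 hB1
        (hybrid_mem (s := {h : Ω → ℝ | Measurable h}) hXmeas hYmeas k)
        (hybrid_mem (s := {h : Ω → ℝ | ∀ ω, h ω ∈ I}) hXI hYI k)
        (hybrid_mem (s := {h : Ω → ℝ | Integrable h μ})
          (fun i => (hX3 i).integrable (by norm_num)) (fun i => (hY3 i).integrable (by norm_num)) k)
  have hA : (lam n I f 3 ^ (3 : ℝ)⁻¹) ^ 3 = lam n I f 3 := by
    exact_mod_cast Real.rpow_inv_natCast_pow (lam_nonneg 3) three_ne_zero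
  have hM : 0 ≤ (B1 + 3 * B2 + B3) * lam n I f 3 / 6 := by
    have := (abs_nonneg _).trans (hB1 0)
    have := (abs_nonneg _).trans (hB2 0)
    have := (abs_nonneg _).trans (hB3 0)
    have := lam_nonneg (n := n) (I := I) (f := f) 3
    positivity
  rw [hA] at key
  calc _ ≤ _ := key
    _ ≤ (B1 + 3 * B2 + B3) * lam n I f 3 / 6 * ∑ _i : Fin n, (γ + γ) :=
      mul_le_mul_of_nonneg_left (Finset.sum_le_sum fun i _ => add_le_add (hγX i) (hγY i)) hM
    _ = _ := by
      rw [Finset.sum_const, Finset.card_univ, Fintype.card_fin, nsmul_eq_mul]; ring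

theorem stmt1
    {Ω : Type} [MeasurableSpace Ω] {μ : Measure Ω} [IsProbabilityMeasure μ]
    {n : ℕ} {I : Set ℝ} (hIopen : IsOpen I) (hIconn : I.OrdConnected)
    (hI0 : (0 : ℝ) ∈ I)
    (X Y : Fin n → Ω → ℝ)
    (hXmeas : ∀ i, Measurable (X i)) (hYmeas : ∀ i, Measurable (Y i))
    (hXI : ∀ i ω, X i ω ∈ I) (hYI : ∀ i ω, Y i ω ∈ I)
    (hindep : iIndepFun (Sum.elim X Y) μ)
    (hmean : ∀ i, ∫ ω, X i ω ∂μ = ∫ ω, Y i ω ∂μ)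
    (hvar : ∀ i, ∫ ω, (X i ω) ^ 2 ∂μ = ∫ ω, (Y i ω) ^ 2 ∂μ)
    (γ : ℝ)
    (hX3 : ∀ i, MemLp (X i) 3 μ) (hY3 : ∀ i, MemLp (Y i) 3 μ)
    (hγX : ∀ i, ∫ ω, |X i ω| ^ 3 ∂μ ≤ γ) (hγY : ∀ i, ∫ ω, |Y i ω| ^ 3 ∂μ ≤ γ)
    (f : (Fin n → ℝ) → ℝ) (hf : CoordDiff3 n I f)
    (hbdd2 : BddAbove (lamSet n I f 2)) (hbdd3 : BddAbove (lamSet n I f 3))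
    (g : ℝ → ℝ) (hg : ∀ p < 3, Differentiable ℝ (iteratedDeriv p g))
    (B1 B2 B3 : ℝ)
    (hB1 : ∀ t, |deriv g t| ≤ B1)
    (hB2 : ∀ t, |iteratedDeriv 2 g t| ≤ B2)
    (hB3 : ∀ t, |iteratedDeriv 3 g t| ≤ B3) :
    |(∫ ω, g (f fun i => X i ω) ∂μ) - ∫ ω, g (f fun i => Y i ω) ∂μ| ≤
      2 * (B1 / 6 + B2 / 2 + B3 / 6) * γ * n * lam n I f 3 :=
  stmt1_general hIopen hIconn hI0 X Y hXmeas hYmeas hXI hYI hindep hmean hvar γ hX3 hY3 hγX hγY f hf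
    hbdd3 g hg B1 B2 B3 hB1 hB2 hB3
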